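/- arXiv:2205.13305 — 2 statements merged into one kernel-verified Lean document; each statement's English description precedes it below -/
import Mathlib

section
/- For all integers p, q with p ≥ 3 and q ≥ p + 2, the determinant of the intersection matrix Q_{I-I}(p, q) equals (−1)^{q−1}. -/
open Matrix

/-- Entry of the tridiagonal pattern: 2 on the diagonal, -1 adjacent to it, 0 elsewhere. -/
def triEnt (i j : ℕ) : ℤ :=
  if i = j then 2 else if i + 1 = j ∨ j + 1 = i then -1 else 0

/-- The (1-indexed) entry of the intersection matrix `Q_{I-I}(p, q)`:
the principal submatrix on indices 1,…,p−2 is J_{p−2}; on indices p−1,…,q−3 it is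
J_{q−p−1}; on indices q−2,…,2q−4 it is −J_{q−1}; writing α = 2q−3 and β = 2q−2,
the entry (α, α) is 2, the entry (β, β) is 0, the entries (α, p−2), (p−2, α),
(α, p−1), (p−1, α), (β, q−3), (q−3, β) are 1, the entries (β, q−2) and (q−2, β)
are −1, and all other entries (including (α, β) and (β, α)) are 0. -/
def QIIent (p q i j : ℕ) : ℤ :=
  if i ≤ p - 2 ∧ j ≤ p - 2 then triEnt i j
  else if p - 1 ≤ i ∧ i ≤ q - 3 ∧ p - 1 ≤ j ∧ j ≤ q - 3 then triEnt i j
  else if q - 2 ≤ i ∧ i ≤ 2*q - 4 ∧ q - 2 ≤ j ∧ j ≤ 2*q - 4 then -(triEnt i j)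
  else if i = 2*q - 3 ∧ j = 2*q - 3 then 2
  else if (i = 2*q - 3 ∧ (j = p - 2 ∨ j = p - 1)) ∨ (j = 2*q - 3 ∧ (i = p - 2 ∨ i = p - 1)) then 1
  else if (i = 2*q - 2 ∧ j = q - 3) ∨ (j = 2*q - 2 ∧ i = q - 3) then 1
  else if (i = 2*q - 2 ∧ j = q - 2) ∨ (j = 2*q - 2 ∧ i = q - 2) then -1
  else 0

/-- The intersection matrix `Q_{I-I}(p, q)`, of size (2q−2)×(2q−2). -/
def QI_I (p q : ℕ) : Matrix (Fin (2*q - 2)) (Fin (2*q - 2)) ℤ :=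
  fun i j => QIIent p q (i.val + 1) (j.val + 1)


/-!
The weighted graph of `Q_{I-I}(p, q)` is a path
`1 — ⋯ — (p−2) — α — (p−1) — ⋯ — (q−3) — β — (q−2) — ⋯ — (2q−4)`
with edge weights `±1` and vertex weights `2` on its first `q − 2` vertices, `0` at `β` and `−2`
on its last `q − 1` vertices. Listing the vertices in path order makes the matrix symmetric
tridiagonal, whose determinant only depends on the squares of the off-diagonal entries. Its
trailing principal minors `D_s` then satisfy `D_s = d_s D_{s+1} − D_{s+2}`, which is solved by
`D_s = (−1)^(q+1) (s+1)` for `s ≤ q − 2` and `D_s = (−1)^s (2q − 1 − s)` beyond; so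
`det = D_0 = (−1)^(q+1)`.
-/

section SymmTridiagonal

variable {R : Type*} [CommRing R]

def symmTridiagonal (d e : ℕ → R) (n : ℕ) : Matrix (Fin n) (Fin n) R :=
  Matrix.of fun i j =>
    if (i : ℕ) = j then d i else if (i : ℕ) + 1 = j then e i else if (j : ℕ) + 1 = i then e j else 0

lemma det_symmTridiagonal_succ_succ (d e : ℕ → R) (n : ℕ) :
    (symmTridiagonal d e (n + 2)).det =
      d 0 * (symmTridiagonal (fun k => d (k + 1)) (fun k => e (k + 1)) (n + 1)).det -
        e 0 ^ 2 * (symmTridiagonal (fun k => d (k + 2)) (fun k => e (k + 2)) n).det := by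
  set M := symmTridiagonal d e (n + 2)
  have minor_zero : M.submatrix Fin.succ (Fin.succAbove 0) =
      symmTridiagonal (fun k => d (k + 1)) (fun k => e (k + 1)) (n + 1) := by
    ext i j
    simp [M, symmTridiagonal]
  have minor_one : (M.submatrix Fin.succ (Fin.succAbove 1)).submatrix (Fin.succAbove 0) Fin.succ =
      symmTridiagonal (fun k => d (k + 2)) (fun k => e (k + 2)) n := by
    ext i j
    simp [M, symmTridiagonal]
  have M00 : M 0 0 = d 0 := by simp [M, symmTridiagonal]
  have M01 : M 0 1 = e 0 := by simp [M, symmTridiagonal]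
  have M10 : M.submatrix Fin.succ (Fin.succAbove 1) 0 0 = e 0 := by simp [M, symmTridiagonal]
  rw [det_succ_row_zero, Fin.sum_univ_succ, Fin.sum_univ_succ, Finset.sum_eq_zero fun j _ => ?_,
    Fin.succ_zero_eq_one, det_succ_column_zero (M.submatrix Fin.succ (Fin.succAbove 1)),
    Fin.sum_univ_succ, Finset.sum_eq_zero fun i _ => ?_, minor_zero, minor_one, M00, M01, M10]
  · simp only [Fin.val_zero, Fin.val_one, pow_zero, pow_one]
    ring
  · simp [M, symmTridiagonal, Fin.succAbove]
  · simp [M, symmTridiagonal]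

lemma det_symmTridiagonal_eq_of_recurrence {d e g : ℕ → R} {N : ℕ} (hN : g N = 1)
    (hN1 : g (N + 1) = 0) (hg : ∀ s < N, g s = d s * g (s + 1) - e s ^ 2 * g (s + 2)) :
    (symmTridiagonal d e N).det = g 0 := by
  induction N using Nat.twoStepInduction generalizing d e g with
  | zero => simp [hN]
  | one => simp [symmTridiagonal, hg 0 one_pos, hN, hN1]
  | more N ih₀ ih₁ =>
    rw [det_symmTridiagonal_succ_succ, hg 0 (by omega),
      ih₁ (g := fun k => g (k + 1)) hN hN1 fun s hs => hg (s + 1) (by omega),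
      ih₀ (g := fun k => g (k + 2)) hN hN1 fun s hs => hg (s + 2) (by omega)]

end SymmTridiagonal

lemma triEnt_symm (i j : ℕ) : triEnt i j = triEnt j i := by
  unfold triEnt
  split_ifs <;> omega

lemma QIIent_symm (p q i j : ℕ) : QIIent p q i j = QIIent p q j i := by
  unfold QIIent
  rw [triEnt_symm i j]
  refine if_congr (by tauto) rfl <| if_congr (by tauto) rfl <| if_congr (by tauto) rfl <|
    if_congr (by tauto) rfl <| if_congr (by tauto) rfl <| if_congr (by tauto) rfl <|
    if_congr (by tauto) rfl rfl

/-- The 0-indexed row of `QI_I p q` holding the `k`-th vertex of the path. -/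
def pathIndex (p q k : ℕ) : ℕ :=
  if k + 3 ≤ p then k else if k + 2 = p then 2 * q - 4
  else if k + 3 ≤ q then k - 1 else if k + 2 = q then 2 * q - 3 else k - 2

def pathDiag (q k : ℕ) : ℤ := if k + 3 ≤ q then 2 else if k + 2 = q then 0 else -2

def pathWeight (p q k : ℕ) : ℤ := QIIent p q (pathIndex p q k + 1) (pathIndex p q (k + 1) + 1)

lemma pathIndex_cases (p q k : ℕ) :
    (k + 3 ≤ p ∧ pathIndex p q k = k) ∨ (k + 2 = p ∧ pathIndex p q k = 2 * q - 4) ∨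
      (p ≤ k + 1 ∧ k + 3 ≤ q ∧ pathIndex p q k = k - 1) ∨
      (k + 2 = q ∧ pathIndex p q k = 2 * q - 3) ∨ (q ≤ k + 1 ∧ pathIndex p q k = k - 2) := by
  unfold pathIndex
  split_ifs <;> omega

section Path

variable {p q : ℕ}

lemma pathIndex_lt (hq : p + 2 ≤ q) {k : ℕ} (hk : k < 2 * q - 2) :
    pathIndex p q k < 2 * q - 2 := by
  unfold pathIndex
  split_ifs <;> omega

lemma pathIndex_injOn (hp : 3 ≤ p) (hq : p + 2 ≤ q) :
    Set.InjOn (pathIndex p q) (Set.Iio (2 * q - 2)) := by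
  intro k hk l hl h
  rw [Set.mem_Iio] at hk hl
  unfold pathIndex at h
  split_ifs at h <;> omega

lemma QIIent_pathIndex_self (hp : 3 ≤ p) (hq : p + 2 ≤ q) {k : ℕ} (hk : k < 2 * q - 2) :
    QIIent p q (pathIndex p q k + 1) (pathIndex p q k + 1) = pathDiag q k := by
  rcases pathIndex_cases p q k with ⟨hk', e⟩ | ⟨hk', e⟩ | ⟨hk', hk'', e⟩ | ⟨hk', e⟩ | ⟨hk', e⟩ <;>
  · rw [e]
    unfold QIIent triEnt pathDiag
    repeat (first | rw [if_pos (by omega)] | rw [if_neg (by omega)])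

lemma QIIent_pathIndex_eq_zero (hp : 3 ≤ p) (hq : p + 2 ≤ q) {k l : ℕ} (hkl : k + 2 ≤ l)
    (hl : l < 2 * q - 2) : QIIent p q (pathIndex p q k + 1) (pathIndex p q l + 1) = 0 := by
  rcases pathIndex_cases p q k with ⟨hk', e⟩ | ⟨hk', e⟩ | ⟨hk', hk'', e⟩ | ⟨hk', e⟩ | ⟨hk', e⟩ <;>
  rcases pathIndex_cases p q l with ⟨hl', f⟩ | ⟨hl', f⟩ | ⟨hl', hl'', f⟩ | ⟨hl', f⟩ | ⟨hl', f⟩ <;>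
  · rw [e, f]
    unfold QIIent triEnt
    repeat (first | rw [if_pos (by omega)] | rw [if_neg (by omega)])
    all_goals omega

lemma pathWeight_sq (hp : 3 ≤ p) (hq : p + 2 ≤ q) {k : ℕ} (hk : k + 1 < 2 * q - 2) :
    pathWeight p q k ^ 2 = 1 := by
  unfold pathWeight
  rcases pathIndex_cases p q k with ⟨hk', e⟩ | ⟨hk', e⟩ | ⟨hk', hk'', e⟩ | ⟨hk', e⟩ | ⟨hk', e⟩ <;>
  rcases pathIndex_cases p q (k + 1) with ⟨hl', f⟩ | ⟨hl', f⟩ | ⟨hl', hl'', f⟩ | ⟨hl', f⟩ | ⟨hl', f⟩ <;>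
  · rw [e, f]
    unfold QIIent triEnt
    repeat (first | rw [if_pos (by omega)] | rw [if_neg (by omega)])
    all_goals first | omega | norm_num

lemma exists_equiv_submatrix_QI_I_eq_symmTridiagonal (hp : 3 ≤ p) (hq : p + 2 ≤ q) :
    ∃ σ : Fin (2 * q - 2) ≃ Fin (2 * q - 2),
      (QI_I p q).submatrix σ σ = symmTridiagonal (pathDiag q) (pathWeight p q) (2 * q - 2) := by
  let f : Fin (2 * q - 2) → Fin (2 * q - 2) := fun k => ⟨pathIndex p q k, pathIndex_lt hq k.2⟩
  have hf : f.Injective := fun k l h =>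
    Fin.ext (pathIndex_injOn hp hq k.2 l.2 (congrArg Fin.val h))
  refine ⟨Equiv.ofBijective f (Finite.injective_iff_bijective.mp hf), ?_⟩
  ext k l
  change QIIent p q (pathIndex p q k + 1) (pathIndex p q l + 1) =
    if (k : ℕ) = l then _ else if (k : ℕ) + 1 = l then _ else if (l : ℕ) + 1 = k then _ else 0
  rcases lt_trichotomy (k : ℕ) l with hkl | hkl | hkl
  · rcases (by omega : (k : ℕ) + 1 = l ∨ (k : ℕ) + 2 ≤ l) with h | h
    · rw [if_neg (by omega), if_pos h, pathWeight, h]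
    · rw [if_neg (by omega), if_neg (by omega), if_neg (by omega),
        QIIent_pathIndex_eq_zero hp hq h l.2]
  · rw [if_pos hkl, ← hkl, QIIent_pathIndex_self hp hq k.2]
  · rw [QIIent_symm]
    rcases (by omega : (l : ℕ) + 1 = k ∨ (l : ℕ) + 2 ≤ k) with h | h
    · rw [if_neg (by omega), if_neg (by omega), if_pos h, pathWeight, h]
    · rw [if_neg (by omega), if_neg (by omega), if_neg (by omega),
        QIIent_pathIndex_eq_zero hp hq h k.2]

end Path

/-- The determinant of the trailing principal minor of the path matrix starting at row `s`. -/
def pathContinuant (q s : ℕ) : ℤ :=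
  if s + 2 ≤ q then (-1) ^ (q + 1) * (s + 1) else (-1) ^ s * (2 * q - 1 - s)

lemma pathContinuant_recurrence (q s : ℕ) :
    pathContinuant q s = pathDiag q s * pathContinuant q (s + 1) - pathContinuant q (s + 2) := by
  unfold pathContinuant pathDiag
  rcases (by omega : s + 4 ≤ q ∨ s + 3 = q ∨ s + 2 = q ∨ q ≤ s + 1) with h | rfl | rfl | h <;>
  · split_ifs <;> first | omega | (push_cast; ring)

lemma pathContinuant_zero {q : ℕ} (hq : 2 ≤ q) : pathContinuant q 0 = (-1) ^ (q - 1) := by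
  rw [pathContinuant, if_pos (by omega), show q + 1 = q - 1 + 2 by omega, pow_add]
  norm_num

lemma pathContinuant_two_mul_sub_two {q : ℕ} (hq : 1 ≤ q) : pathContinuant q (2 * q - 2) = 1 := by
  rw [pathContinuant, if_neg (by omega), Even.neg_one_pow ⟨q - 1, by omega⟩]
  push_cast [show 2 ≤ 2 * q by omega]
  ring

lemma pathContinuant_two_mul_sub_two_add_one {q : ℕ} (hq : 1 ≤ q) :
    pathContinuant q (2 * q - 2 + 1) = 0 := by
  rw [pathContinuant, if_neg (by omega)]
  push_cast [show 2 ≤ 2 * q by omega]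
  ring

theorem det_QI_I (p q : ℕ) (hp : 3 ≤ p) (hq : p + 2 ≤ q) :
    (QI_I p q).det = (-1) ^ (q - 1) := by
  obtain ⟨σ, hσ⟩ := exists_equiv_submatrix_QI_I_eq_symmTridiagonal hp hq
  have hN := pathContinuant_two_mul_sub_two (q := q) (by omega)
  have hN1 := pathContinuant_two_mul_sub_two_add_one (q := q) (by omega)
  have hg : ∀ s < 2 * q - 2, pathContinuant q s =
      pathDiag q s * pathContinuant q (s + 1) - pathWeight p q s ^ 2 * pathContinuant q (s + 2) := by
    intro s hs
    rcases (by omega : s + 1 < 2 * q - 2 ∨ s + 2 = 2 * q - 2 + 1) with h | h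
    · rw [pathWeight_sq hp hq h, one_mul, ← pathContinuant_recurrence]
    · rw [pathContinuant_recurrence q s, h, hN1]
      ring
  rw [← det_submatrix_equiv_self σ, hσ, det_symmTridiagonal_eq_of_recurrence hN hN1 hg,
    pathContinuant_zero (by omega)]
end

section
/- For every odd integer n with n ≥ 431 and n ≠ 461, there exist a positive integer u and integers p, q, r with 2 ≤ p < q < r such that n = u²p(p−1) + q(q−1) + r(r−1) + 2uq(p−1) + 2ur(p−1) + 2r(q−1) + u + 2; that is, n = d(p, q, r, u, 1, 1). -/
/-!
Write `T = u p + q + r`. Then `d(p, q, r, u, 1, 1) = T² − (2u + 1) T + u + 2 + 2m` with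
`2m = u(u + 1) p − 2r`, and for fixed `u` and `T` the conditions `2 ≤ p < q < r` only confine
`m` to an interval whose length grows linearly in `T`. Every odd `n ≥ 431` lies in a window
`S² − 5S + 17 ≤ n ≤ S² − 3S + 11` with `S ≥ 23`. Taking `u = 1`, `T = S` reaches all of it
except the top eight values, and these are reached with `u = 3`, `T = S + 2` once `S ≥ 37`.
The windows with `23 ≤ S ≤ 36` are settled by a bounded search over `u ∈ {1, 3, 5, 7}`,
which fails only at `461`.
-/

/-- `d(p, q, r, u, v, w) = d₃ + 1/2` for the overtwisted contact structure on S³ supported by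
the real algebraic open book of the graph multilink of splice type (I-I-I). -/
def dIII (p q r u v w : ℤ) : ℤ :=
  u^2 * p * (p - 1) + v^2 * q * (q - 1) + w^2 * r * (r - 1)
    + 2*u*v * q * (p - 1) + 2*u*w * r * (p - 1) + 2*v*w * r * (q - 1) + u + v + w

theorem exists_lt_and_le_succ {α : Type*} [LinearOrder α] (f : ℕ → α) (x : α) (h0 : f 0 < x)
    (hx : ∃ k, x ≤ f k) : ∃ k, f k < x ∧ x ≤ f (k + 1) := by
  classical
  obtain ⟨k, hk⟩ := Nat.exists_eq_succ_of_ne_zero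
    (fun h => h0.not_ge (h ▸ Nat.find_spec hx : x ≤ f 0))
  exact ⟨k, not_le.mp (Nat.find_min hx (hk ▸ k.lt_succ_self)),
    by simpa [hk] using Nat.find_spec hx⟩

def IsDIIIValue (n : ℤ) : Prop :=
  ∃ u p q r : ℤ, 0 < u ∧ 2 ≤ p ∧ p < q ∧ q < r ∧ n = dIII p q r u 1 1

/-- Here `u = 2a + 1`, `T = u p + q + r` and `2m = u(u + 1) p − 2r`; the two inequalities are
`p < q` and `q < r`. -/
theorem isDIIIValue_of_lt (a p T m : ℤ) (ha : 0 ≤ a) (hp : 2 ≤ p)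
    (hpq : (a + 1) * (2 * a + 3) * p < T + m)
    (hqr : T + 2 * m < (2 * a + 1) * (2 * a + 3) * p) :
    IsDIIIValue (T ^ 2 - (4 * a + 3) * T + 2 * a + 3 + 2 * m) :=
  ⟨2 * a + 1, p, T + m - (2 * a + 1) * (a + 2) * p, (2 * a + 1) * (a + 1) * p - m,
    by omega, hp, by linear_combination hpq, by linear_combination hqr, by unfold dIII; ring⟩

theorem isDIIIValue_of_u_eq_one (S t : ℤ) (ht : 4 ≤ t) (htS : t ≤ S - 7) :
    IsDIIIValue (S ^ 2 - 3 * S + 3 - 2 * t) := by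
  have := isDIIIValue_of_lt 0 ((S - t - 1) / 3) S (-t) le_rfl (by omega) (by omega) (by omega)
  convert this using 1
  ring

theorem isDIIIValue_of_u_eq_three (T m : ℤ) (hm : 20 - T < m) (hmT : m + 30 < T) :
    IsDIIIValue (T ^ 2 - 7 * T + 5 + 2 * m) := by
  have := isDIIIValue_of_lt 1 (max 2 ((T + 2 * m) / 15 + 1)) T m zero_le_one
    (le_max_left _ _) (by omega) (by omega)
  convert this using 1
  ring

def witnessCheck (n a T p : ℤ) : Bool :=
  let m := (n - T ^ 2 + (4 * a + 3) * T - 2 * a - 3) / 2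
  decide (0 ≤ a ∧ 2 ≤ p ∧ (a + 1) * (2 * a + 3) * p < T + m ∧
    T + 2 * m < (2 * a + 1) * (2 * a + 3) * p ∧
    n = T ^ 2 - (4 * a + 3) * T + 2 * a + 3 + 2 * m)

theorem isDIIIValue_of_witnessCheck {n a T p : ℤ} (h : witnessCheck n a T p = true) :
    IsDIIIValue n := by
  obtain ⟨ha, hp, hpq, hqr, hn⟩ := of_decide_eq_true h
  exact hn ▸ isDIIIValue_of_lt a p T _ ha hp hpq hqr

def hasWitnessNear (n S : ℤ) : Bool :=
  (List.range 4).any fun a => (List.range 6).any fun j => (List.range 10).any fun i =>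
    witnessCheck n a (S + j) (i + 2)

theorem isDIIIValue_of_hasWitnessNear {n S : ℤ} (h : hasWitnessNear n S = true) :
    IsDIIIValue n := by
  simp only [hasWitnessNear, List.any_eq_true] at h
  obtain ⟨_, _, _, _, _, _, h⟩ := h
  exact isDIIIValue_of_witnessCheck h

theorem isDIIIValue_of_mem_Icc (S t : ℤ) (hS : S ∈ Finset.Icc 23 36) (ht : t ∈ Finset.Icc (-4) 3)
    (hn : S ^ 2 - 3 * S + 3 - 2 * t ≠ 461) : IsDIIIValue (S ^ 2 - 3 * S + 3 - 2 * t) := by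
  have hsearch : ∀ S ∈ Finset.Icc (23 : ℤ) 36, ∀ t ∈ Finset.Icc (-4 : ℤ) 3,
      S ^ 2 - 3 * S + 3 - 2 * t = 461 ∨ hasWitnessNear (S ^ 2 - 3 * S + 3 - 2 * t) S = true := by
    decide +kernel
  exact isDIIIValue_of_hasWitnessNear ((hsearch S hS t ht).resolve_left hn)

theorem dIII_odd_values (n : ℤ) (hodd : Odd n) (hn : 431 ≤ n) (hn' : n ≠ 461) :
    ∃ u p q r : ℤ, 0 < u ∧ 2 ≤ p ∧ p < q ∧ q < r ∧
      n = u^2 * p * (p - 1) + q * (q - 1) + r * (r - 1)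
          + 2*u * q * (p - 1) + 2*u * r * (p - 1) + 2 * r * (q - 1) + u + 2 := by
  obtain ⟨k, hk, hk'⟩ := exists_lt_and_le_succ (fun k : ℕ => (k : ℤ) ^ 2 - 3 * k + 11) n
    (by norm_num; omega) ⟨n.toNat, by nlinarith [Int.self_le_toNat n]⟩
  obtain ⟨S, hlo, hhi⟩ : ∃ S : ℤ, S ^ 2 - 5 * S + 15 < n ∧ n ≤ S ^ 2 - 3 * S + 11 :=
    ⟨k + 1, by linear_combination hk, by push_cast at hk'; linear_combination hk'⟩
  obtain ⟨t, rfl⟩ : ∃ t, n = S ^ 2 - 3 * S + 3 - 2 * t := by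
    obtain ⟨j, hj⟩ := hodd
    obtain ⟨e, he⟩ := Int.even_mul_succ_self (S - 2)
    exact ⟨e - j, by linear_combination hj - he⟩
  have hS : 23 ≤ S := by nlinarith
  have hval : IsDIIIValue (S ^ 2 - 3 * S + 3 - 2 * t) := by
    rcases le_or_gt 4 t with ht | ht
    · exact isDIIIValue_of_u_eq_one S t ht (by linarith)
    rcases le_or_gt 37 S with hS' | hS'
    · convert isDIIIValue_of_u_eq_three (S + 2) (4 - t) (by omega) (by omega) using 1
      ring
    · exact isDIIIValue_of_mem_Icc S t (Finset.mem_Icc.mpr ⟨hS, by omega⟩)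
        (Finset.mem_Icc.mpr ⟨by linarith, by omega⟩) hn'
  obtain ⟨u, p, q, r, hu, hp, hpq, hqr, h⟩ := hval
  exact ⟨u, p, q, r, hu, hp, hpq, hqr, h.trans (by unfold dIII; ring)⟩
end
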